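/- arXiv:0802.4459 — 2 statements merged into one kernel-verified Lean document; each statement's English description precedes it below -/
import Mathlib

section
/- The jump transformation R preserves the probability measure μ: for every Borel set A ⊆ (0,1]∖ℚ, μ(R⁻¹A) = μ(A). -/
open MeasureTheory Filter

noncomputable section

/-- The ECF digit `k` of a point `x ∈ (0,1]`: `x ∈ B(k,ξ)`. -/
def ecfK (x : ℝ) : ℕ := (⌊1/x⌋ + 1).toNat / 2

/-- The ECF digit `ξ` of a point `x ∈ (0,1]`. -/
def ecfXi (x : ℝ) : ℤ := if ⌊1/x⌋ % 2 = 0 then 1 else -1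

/-- The ECF Gauss-like map `T(x) = ξ (1/x - 2k)` for `x ∈ B(k,ξ)`. -/
def ecfT (x : ℝ) : ℝ := (ecfXi x : ℝ) * (1/x - 2 * (ecfK x : ℝ))

/-- The domain: irrational points of `(0,1]`. -/
def ECFdom : Set ℝ := {x | x ∈ Set.Ioc (0:ℝ) 1 ∧ Irrational x}

/-- The `n`-th ECF digit `k_n(x)` (for `n ≥ 1`). -/
def ecfDigK (x : ℝ) (n : ℕ) : ℕ := ecfK (ecfT^[n-1] x)

/-- The `n`-th ECF digit `ξ_n(x)` (for `n ≥ 1`), with the convention `ξ_0 = 1`. -/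
def ecfDigXi (x : ℝ) (n : ℕ) : ℤ := if n = 0 then 1 else ecfXi (ecfT^[n-1] x)

/-- Numerators of continued fractions with even partial quotients built from digit
sequences `(k_n)_{n≥1}`, `(ξ_n)_{n≥0}`:
`p_n = 2 k_n p_{n-1} + ξ_{n-1} p_{n-2}`, `p_0 = 0`, `p_{-1} = 1`. -/
def cfP (k : ℕ → ℕ) (ξ : ℕ → ℤ) : ℕ → ℤ
  | 0 => 0
  | 1 => ξ 0
  | (n+2) => 2 * (k (n+2) : ℤ) * cfP k ξ (n+1) + ξ (n+1) * cfP k ξ n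

/-- Denominators: `q_n = 2 k_n q_{n-1} + ξ_{n-1} q_{n-2}`, `q_0 = 1`, `q_{-1} = 0`. -/
def cfQ (k : ℕ → ℕ) (ξ : ℕ → ℤ) : ℕ → ℤ
  | 0 => 1
  | 1 => 2 * (k 1 : ℤ)
  | (n+2) => 2 * (k (n+2) : ℤ) * cfQ k ξ (n+1) + ξ (n+1) * cfQ k ξ n

/-- The ECF convergent numerators `p_n(x)`. -/
def ecfP (x : ℝ) : ℕ → ℤ := cfP (ecfDigK x) (ecfDigXi x)

/-- The ECF convergent denominators `q_n(x)`. -/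
def ecfQ (x : ℝ) : ℕ → ℤ := cfQ (ecfDigK x) (ecfDigXi x)

/-- `τ(x) = min {j ≥ 0 : T^j(x) ∈ (0,1/2]}`. -/
def ecfTau (x : ℝ) : ℕ := sInf {j : ℕ | ecfT^[j] x ∈ Set.Ioc (0:ℝ) (1/2)}

/-- The jump transformation `R(x) = T^{τ(x)+1}(x)`. -/
def ecfR (x : ℝ) : ℝ := ecfT^[ecfTau x + 1] x

/-- `ν_0(x) = 1`, `ν_n(x) = ν_{n-1}(x) + τ(R^{n-1}(x)) + 1`. -/
def ecfNu (x : ℝ) : ℕ → ℕ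
  | 0 => 1
  | (n+1) => ecfNu x n + ecfTau (ecfR^[n] x) + 1

/-- The `R`-denominators: `q̂_0(x) = 1`, `q̂_n(x) = q_{ν_n(x)}(x)`. -/
def ecfQhat (x : ℝ) (n : ℕ) : ℤ := if n = 0 then 1 else ecfQ x (ecfNu x n)

/-- The renewal time `n̂_L(x) = min {n ≥ 1 : q̂_n(x) > L}`. -/
def ecfNhat (x : ℝ) (L : ℝ) : ℕ := sInf {n : ℕ | 1 ≤ n ∧ L < (ecfQhat x n : ℝ)}

/-- The `R`-invariant probability measure `μ`, with density
`f(x) = (1/log 3)(1/(3-x) + 1/(1+x))` on `(0,1]`. -/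
def ecfMu : Measure ℝ :=
  (volume.restrict (Set.Ioc 0 1)).withDensity
    (fun x => ENNReal.ofReal ((1/Real.log 3) * (1/(3-x) + 1/(1+x))))

/-- Σ-coding components: `h_n(x) = τ(R^{n-1}(x))`. -/
def sigmaH (x : ℝ) (n : ℕ) : ℕ := ecfTau (ecfR^[n-1] x)

/-- Σ-coding components: `m_n(x) = k_{ν_n(x)-1}(x)`. -/
def sigmaM (x : ℝ) (n : ℕ) : ℕ := ecfDigK x (ecfNu x n - 1)

/-- Σ-coding components: `ε_n(x) = ξ_{ν_n(x)-1}(x)`. -/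
def sigmaE (x : ℝ) (n : ℕ) : ℤ := ecfDigXi x (ecfNu x n - 1)

/-- The alphabet `Σ = ℕ₀ × ((ℕ × {±1}) ∖ {(1,-1)})`, as a subset of `ℕ × (ℕ × ℤ)`. -/
def SigmaSymb : Set (ℕ × (ℕ × ℤ)) :=
  {s | 1 ≤ s.2.1 ∧ ((s.2.2 = 1 ∨ s.2.2 = -1) ∧ ¬(s.2.1 = 1 ∧ s.2.2 = -1))}

/-- The full Σ-coding `σ_n(x) = (h_n, (m_n, ε_n))`. -/
def sigmaCode (x : ℝ) (n : ℕ) : ℕ × (ℕ × ℤ) := (sigmaH x n, (sigmaM x n, sigmaE x n))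

end

/-!
In the odds coordinate `e = x / (1 - x)`, i.e. `x = e / (1 + e)`, the branch `x ↦ 2 - 1/x` of `T`
on `(1/2, 1)` is the shift `e ↦ e - 1`. Hence, for irrational `x`, `τ(x) = ⌊e⌋` and `W(x) := 1 / T^{τ(x)}(x)`
equals `1 + 1 / fract e`, and `R = D ∘ W` with `D(w) = T(1/w)`, which on `[n, n + 1)` is `w - n` or
`n + 1 - w` according to the parity of `n`.

Both push-forwards are computed on intervals. Summing `μ` over the strips `⌊e⌋ = t` shows that
`μ ∘ W⁻¹` has, on `(2, ∞)`, the primitive `(log (w - 1) - log (w + 1)) / log 3`; summing these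
masses over the branches of `D⁻¹ (a, b)` gives back `μ (a, b)`. Both sums telescope, and open
intervals with rational endpoints determine a locally finite measure on `ℝ`.
-/

open Set Filter Topology MeasureTheory Real

noncomputable section

lemma tsum_ofReal_sub_succ_of_antitone {G : ℕ → ℝ} {L : ℝ} (hG : Antitone G)
    (hlim : Tendsto G atTop (𝓝 L)) :
    ∑' n, ENNReal.ofReal (G n - G (n + 1)) = ENNReal.ofReal (G 0 - L) := by
  have hnn n : 0 ≤ G n - G (n + 1) := sub_nonneg.2 (hG n.le_succ)
  have hsum : HasSum (fun n => G n - G (n + 1)) (G 0 - L) := by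
    refine (hasSum_iff_tendsto_nat_of_nonneg hnn _).2 ?_
    simp_rw [Finset.sum_range_sub']
    exact tendsto_const_nhds.sub hlim
  rw [← ENNReal.ofReal_tsum_of_nonneg hnn hsum.summable, hsum.tsum_eq]

lemma Irrational.natFloor_lt_self {e : ℝ} (he : Irrational e) (he0 : 0 ≤ e) : (⌊e⌋₊ : ℝ) < e :=
  (Nat.floor_le he0).lt_of_ne (he.ne_nat _).symm

lemma natFloor_eq_of_mem_Ioo_add {e p q : ℝ} {t : ℕ} (hp : 0 ≤ p) (hq : q ≤ 1)
    (he : e ∈ Ioo (t + p) (t + q)) : ⌊e⌋₊ = t :=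
  (Nat.floor_eq_iff (by linarith [he.1, t.cast_nonneg (α := ℝ)])).2
    ⟨by linarith [he.1], by linarith [he.2]⟩

lemma exists_nat_add_mem_Ioo_iff {e p q : ℝ} (hp : 0 ≤ p) (hq : q ≤ 1) :
    (∃ t : ℕ, e ∈ Ioo (t + p) (t + q)) ↔ e - ⌊e⌋₊ ∈ Ioo p q := by
  constructor
  · rintro ⟨t, h⟩
    rw [natFloor_eq_of_mem_Ioo_add hp hq h]
    exact ⟨by linarith [h.1], by linarith [h.2]⟩
  · intro h
    exact ⟨⌊e⌋₊, by linarith [h.1], by linarith [h.2]⟩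

lemma one_add_one_div_mem_Ioo_iff {f c d : ℝ} (hf : 0 < f) (hc : 1 < c) (hd : 1 < d) :
    1 + 1 / f ∈ Ioo c d ↔ f ∈ Ioo (1 / (d - 1)) (1 / (c - 1)) := by
  simp only [mem_Ioo]
  rw [← sub_lt_iff_lt_add', lt_one_div (by linarith) hf, ← lt_sub_iff_add_lt',
    one_div_lt hf (by linarith), and_comm]

namespace ECF

def odds (x : ℝ) : ℝ := x / (1 - x)

def ofOdds (e : ℝ) : ℝ := e / (1 + e)

lemma ofOdds_odds {x : ℝ} (hx : x ≠ 1) : ofOdds (odds x) = x := by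
  have : 1 - x ≠ 0 := sub_ne_zero.2 hx.symm
  unfold ofOdds odds
  field_simp
  ring

lemma strictMonoOn_ofOdds : StrictMonoOn ofOdds (Ici 0) := by
  intro e he e' he' h
  simp only [mem_Ici] at he he'
  unfold ofOdds
  rw [div_lt_div_iff₀ (by linarith) (by linarith)]
  linarith

lemma ofOdds_mem_Ico {e : ℝ} (he : 0 ≤ e) : ofOdds e ∈ Ico 0 1 := by
  unfold ofOdds
  exact ⟨by positivity, (div_lt_one (by linarith)).2 (by linarith)⟩

lemma ofOdds_mem_Ioc_iff {v : ℝ} (hv : 0 < v) : ofOdds v ∈ Ioc 0 (1 / 2) ↔ v ≤ 1 := by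
  unfold ofOdds
  rw [mem_Ioc, div_le_iff₀ (by linarith)]
  exact ⟨fun h => by linarith [h.2], fun h => ⟨by positivity, by linarith⟩⟩

lemma mem_Ioo_ofOdds_iff {x u v : ℝ} (hx : x ∈ Ico 0 1) (hu : 0 ≤ u) (hv : 0 ≤ v) :
    x ∈ Ioo (ofOdds u) (ofOdds v) ↔ odds x ∈ Ioo u v := by
  have hodds : 0 ≤ odds x := div_nonneg hx.1 (by linarith [hx.2])
  conv_lhs => rw [← ofOdds_odds hx.2.ne]
  simp only [mem_Ioo, strictMonoOn_ofOdds.lt_iff_lt (mem_Ici.2 hu) (mem_Ici.2 hodds),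
    strictMonoOn_ofOdds.lt_iff_lt (mem_Ici.2 hodds) (mem_Ici.2 hv)]

lemma irrational_odds {x : ℝ} (hx : Irrational x) : Irrational (odds x) := by
  have h1 : 1 - x ≠ 0 := sub_ne_zero.2 hx.ne_one.symm
  have : odds x = (((1 : ℕ) : ℝ) - x)⁻¹ - (1 : ℕ) := by
    unfold odds
    push_cast
    field_simp
    ring
  rw [this]
  exact (hx.natCast_sub 1).inv.sub_natCast 1

lemma odds_pos_of_mem {x : ℝ} (hx : x ∈ ECFdom) : 0 < odds x :=
  div_pos hx.1.1 (sub_pos.2 (hx.1.2.lt_of_ne hx.2.ne_one))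

lemma ecfT_one_div {n : ℕ} {w : ℝ} (hw : w ∈ Ico (n : ℝ) (n + 1)) :
    ecfT (1 / w) = if Even n then w - n else n + 1 - w := by
  have hfl : ⌊w⌋ = n := by rw [Int.floor_eq_iff]; exact_mod_cast hw
  unfold ecfT ecfXi ecfK
  rw [one_div_one_div, hfl]
  rcases Nat.even_or_odd' n with ⟨m, rfl | rfl⟩
  · have hK : ((2 * m : ℕ) + 1 : ℤ).toNat / 2 = m := by omega
    have hξ : ((2 * m : ℕ) : ℤ) % 2 = 0 := by omega
    rw [hK, if_pos hξ, if_pos (even_two_mul m)]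
    push_cast
    ring
  · have hK : ((2 * m + 1 : ℕ) + 1 : ℤ).toNat / 2 = m + 1 := by omega
    have hξ : ¬ ((2 * m + 1 : ℕ) : ℤ) % 2 = 0 := by omega
    rw [hK, if_neg hξ, if_neg (Nat.not_even_iff_odd.2 (odd_two_mul_add_one m))]
    push_cast
    ring

lemma ecfT_one_div_mem_Ioo {w : ℝ} (hw : Irrational w) (hw0 : 0 ≤ w) :
    ecfT (1 / w) ∈ Ioo 0 1 := by
  have hlt := hw.natFloor_lt_self hw0
  have hlt' := Nat.lt_floor_add_one w
  rw [ecfT_one_div ⟨Nat.floor_le hw0, hlt'⟩]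
  split_ifs <;> constructor <;> linarith

lemma ecfT_ofOdds {e : ℝ} (he : 1 < e) : ecfT (ofOdds e) = ofOdds (e - 1) := by
  have he0 : 0 < e := by linarith
  have hinv : 1 / ofOdds e = 1 + 1 / e := by
    unfold ofOdds
    field_simp
    ring
  have hmem : 1 / ofOdds e ∈ Ico ((1 : ℕ) : ℝ) ((1 : ℕ) + 1) := by
    rw [hinv, Nat.cast_one]
    exact ⟨by simp [he0.le], by linarith [(div_lt_one he0).2 he]⟩
  rw [← one_div_one_div (ofOdds e), ecfT_one_div hmem, if_neg Nat.not_even_one, hinv, ofOdds,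
    add_sub_cancel]
  field_simp
  ring

lemma ecfT_iterate_ofOdds :
    ∀ (j : ℕ) {e : ℝ}, (j : ℝ) < e → ecfT^[j] (ofOdds e) = ofOdds (e - j)
  | 0, e, _ => by simp
  | j + 1, e, he => by
    push_cast at he
    rw [Function.iterate_succ_apply, ecfT_ofOdds (by linarith [j.cast_nonneg (α := ℝ)]),
      ecfT_iterate_ofOdds j (by linarith)]
    push_cast
    ring_nf

lemma ecfTau_ofOdds {e : ℝ} (he : (⌊e⌋₊ : ℝ) < e) : ecfTau (ofOdds e) = ⌊e⌋₊ := by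
  have hlt := Nat.lt_floor_add_one e
  refine IsLeast.csInf_eq ⟨?_, fun j hj => not_lt.1 fun hjt => ?_⟩
  · rw [mem_ofPred_eq, ecfT_iterate_ofOdds _ he, ofOdds_mem_Ioc_iff (by linarith)]
    linarith
  · have hjt' : (j : ℝ) + 1 ≤ ⌊e⌋₊ := by exact_mod_cast hjt
    rw [mem_ofPred_eq, ecfT_iterate_ofOdds _ (by linarith), ofOdds_mem_Ioc_iff (by linarith)] at hj
    linarith

def ecfEntryInv (x : ℝ) : ℝ := 1 / ecfT^[ecfTau x] x

lemma ecfR_eq_comp : ecfR = (fun w => ecfT (1 / w)) ∘ ecfEntryInv := by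
  ext x
  simp only [ecfR, ecfEntryInv, Function.comp_apply, one_div_one_div,
    Function.iterate_succ_apply']

lemma ecfEntryInv_ofOdds {e : ℝ} (he : (⌊e⌋₊ : ℝ) < e) :
    ecfEntryInv (ofOdds e) = 1 + 1 / (e - ⌊e⌋₊) := by
  have : 0 < e - ⌊e⌋₊ := by linarith
  rw [ecfEntryInv, ecfTau_ofOdds he, ecfT_iterate_ofOdds _ he, ofOdds]
  field_simp
  ring

lemma ecfEntryInv_eq_of_mem {x : ℝ} (hx : x ∈ ECFdom) :
    ecfEntryInv x = 1 + 1 / (odds x - ⌊odds x⌋₊) := by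
  conv_lhs => rw [← ofOdds_odds hx.2.ne_one]
  exact ecfEntryInv_ofOdds ((irrational_odds hx.2).natFloor_lt_self (odds_pos_of_mem hx).le)

lemma two_lt_ecfEntryInv {x : ℝ} (hx : x ∈ ECFdom) : 2 < ecfEntryInv x := by
  have hlt := (irrational_odds hx.2).natFloor_lt_self (odds_pos_of_mem hx).le
  have hfr : odds x - ⌊odds x⌋₊ < 1 := by linarith [Nat.lt_floor_add_one (odds x)]
  have : 1 < 1 / (odds x - ⌊odds x⌋₊) := by rw [lt_div_iff₀ (by linarith)]; linarith
  rw [ecfEntryInv_eq_of_mem hx]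
  linarith

lemma irrational_ecfEntryInv {x : ℝ} (hx : x ∈ ECFdom) : Irrational (ecfEntryInv x) := by
  rw [ecfEntryInv_eq_of_mem hx, one_div]
  exact_mod_cast ((irrational_odds hx.2).sub_natCast _).inv.natCast_add 1

lemma ecfEntryInv_mem_Ioo_iff {x c d : ℝ} (hx : x ∈ ECFdom) (hc : 2 ≤ c) (hd : 1 < d) :
    ecfEntryInv x ∈ Ioo c d ↔
      ∃ t : ℕ, x ∈ Ioo (ofOdds (t + 1 / (d - 1))) (ofOdds (t + 1 / (c - 1))) := by
  have hx' : x ∈ Ico 0 1 := ⟨hx.1.1.le, hx.1.2.lt_of_ne hx.2.ne_one⟩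
  have he := (irrational_odds hx.2).natFloor_lt_self (odds_pos_of_mem hx).le
  have hp : 0 < 1 / (d - 1) := div_pos one_pos (by linarith)
  have hq : 1 / (c - 1) ≤ 1 := (div_le_one (by linarith)).2 (by linarith)
  have hmem (t : ℕ) := mem_Ioo_ofOdds_iff hx' (u := t + 1 / (d - 1)) (v := t + 1 / (c - 1))
    (by positivity) (add_nonneg t.cast_nonneg (div_nonneg zero_le_one (by linarith)))
  simp only [hmem]
  rw [exists_nat_add_mem_Ioo_iff hp.le hq, ecfEntryInv_eq_of_mem hx,
    one_add_one_div_mem_Ioo_iff (by linarith) (by linarith) hd]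

def primMu (y : ℝ) : ℝ := (log (1 + y) - log (3 - y)) / log 3

lemma hasDerivAt_primMu {y : ℝ} (hy : y ∈ Ioo (-1 : ℝ) 3) :
    HasDerivAt primMu ((1 / log 3) * (1 / (3 - y) + 1 / (1 + y))) y := by
  have h1 : 1 + y ≠ 0 := by linarith [hy.1]
  have h3 : 3 - y ≠ 0 := by linarith [hy.2]
  refine (((((hasDerivAt_id y).const_add 1).log h1).sub
    (((hasDerivAt_id y).const_sub 3).log h3)).div_const (log 3)).congr_deriv ?_
  simp only [id]
  ring

lemma continuousOn_ecfMu_density :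
    ContinuousOn (fun x : ℝ => (1 / log 3) * (1 / (3 - x) + 1 / (1 + x))) (Ioo (-1) 3) := by
  refine continuousOn_const.mul (ContinuousOn.add ?_ ?_) <;>
    refine continuousOn_const.div (by fun_prop) fun x hx => ?_ <;> linarith [hx.1, hx.2]

lemma ecfMu_Ioo {a b : ℝ} (ha : 0 ≤ a) (hab : a ≤ b) (hb : b ≤ 1) :
    ecfMu (Ioo a b) = ENNReal.ofReal (primMu b - primMu a) := by
  have hsub : Icc a b ⊆ Ioo (-1) 3 := fun x hx => ⟨by linarith [hx.1], by linarith [hx.2]⟩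
  have hcont := continuousOn_ecfMu_density.mono hsub
  rw [ecfMu, withDensity_apply _ measurableSet_Ioo, Measure.restrict_restrict measurableSet_Ioo,
    inter_eq_left.2 (Ioo_subset_Ioc_self.trans (Ioc_subset_Ioc ha hb)),
    setLIntegral_congr Ioo_ae_eq_Ioc, ← ofReal_integral_eq_lintegral_ofReal,
    ← intervalIntegral.integral_of_le hab, intervalIntegral.integral_eq_sub_of_hasDerivAt]
  · intro x hx
    rw [uIcc_of_le hab] at hx
    exact hasDerivAt_primMu (hsub hx)
  · exact (hcont.mono (uIcc_of_le hab).subset).intervalIntegrable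
  · exact hcont.integrableOn_Icc.mono_set Ioc_subset_Icc_self
  · filter_upwards [ae_restrict_mem measurableSet_Ioc] with x hx
    have := log_pos (by norm_num : (1 : ℝ) < 3)
    have : 0 < 3 - x := by linarith [hx.2]
    have : 0 < 1 + x := by linarith [hx.1]
    positivity

instance : IsFiniteMeasure ecfMu :=
  isFiniteMeasure_withDensity_ofReal
    ((continuousOn_ecfMu_density.mono fun x (hx : x ∈ Icc (0 : ℝ) 1) =>
      ⟨by linarith [hx.1], by linarith [hx.2]⟩).integrableOn_Icc.mono_set Ioc_subset_Icc_self).2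

lemma ae_mem_ECFdom : ∀ᵐ x ∂ecfMu, x ∈ ECFdom :=
  (withDensity_absolutelyContinuous _ _).ae_le ((ae_restrict_iff' measurableSet_Ioc).2 (by
    filter_upwards [(countable_range ((↑) : ℚ → ℝ)).ae_notMem volume] with x hx hI
    exact ⟨hI, hx⟩))

lemma measurable_ecfT : Measurable ecfT := by
  have hfl : Measurable fun x : ℝ => ⌊1 / x⌋ := by fun_prop
  have hξ : Measurable fun x => (ecfXi x : ℝ) :=
    (measurable_from_top (f := fun z : ℤ => ((if z % 2 = 0 then 1 else -1 : ℤ) : ℝ))).comp hfl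
  have hK : Measurable fun x => (ecfK x : ℝ) :=
    (measurable_from_top (f := fun z : ℤ => (((z + 1).toNat / 2 : ℕ) : ℝ))).comp hfl
  unfold ecfT
  fun_prop

lemma measurable_ecfT_one_div : Measurable fun w : ℝ => ecfT (1 / w) :=
  measurable_ecfT.comp (measurable_const.div measurable_id)

lemma aemeasurable_ecfEntryInv : AEMeasurable ecfEntryInv ecfMu :=
  ⟨fun x => 1 + 1 / (odds x - ⌊odds x⌋₊), by unfold odds; fun_prop,
    by filter_upwards [ae_mem_ECFdom] with x hx using ecfEntryInv_eq_of_mem hx⟩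

lemma aemeasurable_ecfR : AEMeasurable ecfR ecfMu := by
  rw [ecfR_eq_comp]
  exact measurable_ecfT_one_div.comp_aemeasurable aemeasurable_ecfEntryInv

def primMuOdds (e : ℝ) : ℝ := (log (2 * e + 1) - log (2 * e + 3)) / log 3

lemma primMu_ofOdds {e : ℝ} (he : 0 ≤ e) : primMu (ofOdds e) = primMuOdds e := by
  have h1 : 1 + ofOdds e = (2 * e + 1) / (1 + e) := by unfold ofOdds; field_simp; ring
  have h3 : 3 - ofOdds e = (2 * e + 3) / (1 + e) := by unfold ofOdds; field_simp; ring
  rw [primMu, primMuOdds, h1, h3, log_div (by positivity) (by positivity),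
    log_div (by positivity) (by positivity)]
  ring

lemma monotoneOn_primMuOdds : MonotoneOn primMuOdds (Ici 0) := by
  intro e (he : 0 ≤ e) e' _ hee'
  unfold primMuOdds
  rw [← log_div (by positivity) (by positivity), ← log_div (by linarith) (by linarith)]
  refine div_le_div_of_nonneg_right (log_le_log (by positivity) ?_) (log_pos (by norm_num)).le
  rw [div_le_div_iff₀ (by positivity) (by linarith)]
  linarith

lemma ecfMu_Ioo_ofOdds {p q : ℝ} (hp : 0 ≤ p) (hpq : p ≤ q) :
    ecfMu (Ioo (ofOdds p) (ofOdds q)) = ENNReal.ofReal (primMuOdds q - primMuOdds p) := by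
  have hq : 0 ≤ q := hp.trans hpq
  rw [ecfMu_Ioo (ofOdds_mem_Ico hp).1 (strictMonoOn_ofOdds.monotoneOn hp hq hpq)
    (ofOdds_mem_Ico hq).2.le, primMu_ofOdds hp, primMu_ofOdds hq]

lemma tsum_ofReal_primMuOdds_sub {u v : ℝ} (hu : 0 ≤ u) (huv : u ≤ v) :
    ∑' t : ℕ, ENNReal.ofReal (primMuOdds (t + v) - primMuOdds (t + u)) =
      ENNReal.ofReal ((log (2 * v + 1) - log (2 * u + 1)) / log 3) := by
  set s : ℕ → ℝ := fun t => (log (2 * t + (2 * v + 1)) - log (2 * t + (2 * u + 1))) / log 3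
  have hstep (t : ℕ) : primMuOdds (t + v) - primMuOdds (t + u) = s t - s (t + 1) := by
    simp only [s, primMuOdds]
    push_cast
    ring_nf
  have hanti : Antitone s := antitone_nat_of_succ_le fun t => by
    have := monotoneOn_primMuOdds (mem_Ici.2 (by positivity : (0 : ℝ) ≤ t + u))
      (mem_Ici.2 (by linarith [t.cast_nonneg (α := ℝ)] : (0 : ℝ) ≤ t + v)) (by linarith)
    linarith [hstep t]
  have hlim : Tendsto s atTop (𝓝 0) := by
    have h y := (tendsto_log_comp_add_sub_log y).comp
      (tendsto_natCast_atTop_atTop.const_mul_atTop (two_pos : (0 : ℝ) < 2))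
    simpa [s] using ((h (2 * v + 1)).sub (h (2 * u + 1))).div_const (log 3)
  simp_rw [hstep]
  rw [tsum_ofReal_sub_succ_of_antitone hanti hlim]
  simp [s]

def primNu (w : ℝ) : ℝ := (log (w - 1) - log (w + 1)) / log 3

lemma primNu_eq_neg_log {w : ℝ} (hw : 1 < w) :
    primNu w = -log (2 * (1 / (w - 1)) + 1) / log 3 := by
  have : 2 * (1 / (w - 1)) + 1 = (w + 1) / (w - 1) := by
    field_simp [(sub_pos.2 hw).ne']
    ring
  rw [primNu, this, log_div (by linarith) (by linarith)]
  ring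

lemma primNu_two_mul_add (k y : ℝ) : primNu (2 * k + 2 + y) = primMuOdds (k + y / 2) := by
  simp only [primNu, primMuOdds]
  ring_nf

lemma map_ecfEntryInv_Ioo {c d : ℝ} (hc : 2 ≤ c) (hcd : c ≤ d) :
    ecfMu.map ecfEntryInv (Ioo c d) = ENNReal.ofReal (primNu d - primNu c) := by
  set p := 1 / (d - 1) with hp_def
  set q := 1 / (c - 1) with hq_def
  have hp : 0 < p := div_pos one_pos (by linarith)
  have hpq : p ≤ q := one_div_le_one_div_of_le (by linarith) (by linarith)
  have hq : q ≤ 1 := (div_le_one (by linarith)).2 (by linarith)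
  have htp (t : ℕ) : 0 ≤ (t : ℝ) + p := by positivity
  have htq (t : ℕ) : 0 ≤ (t : ℝ) + q := add_nonneg t.cast_nonneg (hp.le.trans hpq)
  have hae : ecfEntryInv ⁻¹' Ioo c d =ᵐ[ecfMu] ⋃ t : ℕ, Ioo (ofOdds (t + p)) (ofOdds (t + q)) :=
    eventuallyEq_set.2 (by
      filter_upwards [ae_mem_ECFdom] with x hx
      rw [mem_preimage, ecfEntryInv_mem_Ioo_iff hx hc (by linarith), mem_iUnion])
  have hdisj :
      Pairwise (Function.onFun Disjoint fun t : ℕ => Ioo (ofOdds (t + p)) (ofOdds (t + q))) := by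
    intro t t' htt'
    refine disjoint_left.2 fun x hx hx' => htt' ?_
    have hx0 : x ∈ Ico 0 1 :=
      ⟨(ofOdds_mem_Ico (htp t)).1.trans hx.1.le, hx.2.trans (ofOdds_mem_Ico (htq t)).2⟩
    rw [mem_Ioo_ofOdds_iff hx0 (htp _) (htq _)] at hx hx'
    rw [← natFloor_eq_of_mem_Ioo_add hp.le hq hx, ← natFloor_eq_of_mem_Ioo_add hp.le hq hx']
  rw [Measure.map_apply_of_aemeasurable aemeasurable_ecfEntryInv measurableSet_Ioo,
    measure_congr hae, measure_iUnion hdisj fun _ => measurableSet_Ioo,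
    tsum_congr fun t : ℕ => ecfMu_Ioo_ofOdds (htp t) (by linarith : (t : ℝ) + p ≤ t + q),
    tsum_ofReal_primMuOdds_sub hp.le hpq, primNu_eq_neg_log (by linarith : 1 < d),
    primNu_eq_neg_log (by linarith : 1 < c), ← hp_def, ← hq_def]
  ring_nf

lemma ae_mem_Ioi_two_map_ecfEntryInv : ∀ᵐ w ∂ecfMu.map ecfEntryInv, w ∈ Ioi 2 :=
  (ae_map_iff aemeasurable_ecfEntryInv measurableSet_Ioi).2
    (by filter_upwards [ae_mem_ECFdom] with x hx using two_lt_ecfEntryInv hx)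

def branchPreimage (a b : ℝ) (n : ℕ) : Set ℝ :=
  if Even n then Ioo (n + a) (n + b) else Ioo (n + 1 - b) (n + 1 - a)

section branchPreimage

variable {a b : ℝ}

lemma measurableSet_branchPreimage (n : ℕ) : MeasurableSet (branchPreimage a b n) := by
  unfold branchPreimage
  split_ifs <;> exact measurableSet_Ioo

lemma branchPreimage_subset (ha : 0 ≤ a) (hb : b ≤ 1) (n : ℕ) :
    branchPreimage a b n ⊆ Ioo (n : ℝ) (n + 1) := by
  intro w hw
  unfold branchPreimage at hw
  split_ifs at hw <;> exact ⟨by linarith [hw.1], by linarith [hw.2]⟩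

lemma mem_branchPreimage_iff {n : ℕ} {w : ℝ} (hw : w ∈ Ico (n : ℝ) (n + 1)) :
    w ∈ branchPreimage a b n ↔ ecfT (1 / w) ∈ Ioo a b := by
  rw [ecfT_one_div hw, branchPreimage]
  split_ifs <;> simp only [mem_Ioo] <;> constructor <;> rintro ⟨h1, h2⟩ <;> constructor <;>
    linarith

lemma pairwise_disjoint_branchPreimage (ha : 0 ≤ a) (hb : b ≤ 1) :
    Pairwise (Function.onFun Disjoint fun m : ℕ => branchPreimage a b (m + 2)) := by
  intro m m' hmm'
  refine disjoint_left.2 fun w hw hw' => hmm' ?_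
  have h := branchPreimage_subset ha hb _ hw
  have h' := branchPreimage_subset ha hb _ hw'
  have hw0 : 0 ≤ w := by linarith [h.1, (m + 2).cast_nonneg (α := ℝ)]
  have := ((Nat.floor_eq_iff hw0).2 ⟨h.1.le, h.2⟩).symm.trans
    ((Nat.floor_eq_iff hw0).2 ⟨h'.1.le, h'.2⟩)
  omega

lemma preimage_ecfT_one_div_Ioo_inter_Ioi_two (ha : 0 ≤ a) (hb : b ≤ 1) :
    (fun w => ecfT (1 / w)) ⁻¹' Ioo a b ∩ Ioi 2 = ⋃ m : ℕ, branchPreimage a b (m + 2) := by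
  ext w
  simp only [mem_inter_iff, mem_preimage, mem_Ioi, mem_iUnion]
  constructor
  · rintro ⟨h, hw⟩
    have h2 : 2 ≤ ⌊w⌋₊ := Nat.le_floor (by exact_mod_cast hw.le)
    refine ⟨⌊w⌋₊ - 2, ?_⟩
    rwa [Nat.sub_add_cancel h2,
      mem_branchPreimage_iff ⟨Nat.floor_le (by linarith), Nat.lt_floor_add_one w⟩]
  · rintro ⟨m, hm⟩
    have hI := branchPreimage_subset ha hb _ hm
    refine ⟨(mem_branchPreimage_iff ⟨hI.1.le, hI.2⟩).1 hm, ?_⟩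
    have := hI.1
    push_cast at this
    linarith [m.cast_nonneg (α := ℝ)]

lemma map_ecfEntryInv_branchPreimage_even (ha : 0 ≤ a) (hab : a ≤ b) (k : ℕ) :
    ecfMu.map ecfEntryInv (branchPreimage a b (2 * k + 2)) =
      ENNReal.ofReal (primMuOdds (k + b / 2) - primMuOdds (k + a / 2)) := by
  have hk := k.cast_nonneg (α := ℝ)
  rw [branchPreimage, if_pos (by simp [parity_simps]),
    map_ecfEntryInv_Ioo (by push_cast; linarith) (by linarith)]
  push_cast
  rw [primNu_two_mul_add, primNu_two_mul_add]

lemma map_ecfEntryInv_branchPreimage_odd (hab : a ≤ b) (hb : b ≤ 1) (k : ℕ) :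
    ecfMu.map ecfEntryInv (branchPreimage a b (2 * k + 1 + 2)) =
      ENNReal.ofReal (primMuOdds (k + (2 - a) / 2) - primMuOdds (k + (2 - b) / 2)) := by
  have hk := k.cast_nonneg (α := ℝ)
  rw [branchPreimage, if_neg (by simp [parity_simps]),
    map_ecfEntryInv_Ioo (by push_cast; linarith) (by linarith)]
  push_cast
  rw [show 2 * (k : ℝ) + 1 + 2 + 1 - a = 2 * k + 2 + (2 - a) by ring,
    show 2 * (k : ℝ) + 1 + 2 + 1 - b = 2 * k + 2 + (2 - b) by ring,
    primNu_two_mul_add, primNu_two_mul_add]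

lemma map_ecfEntryInv_preimage_Ioo (ha : 0 ≤ a) (hab : a ≤ b) (hb : b ≤ 1) :
    ecfMu.map ecfEntryInv ((fun w => ecfT (1 / w)) ⁻¹' Ioo a b) = ecfMu (Ioo a b) := by
  have hlog3 : 0 < log 3 := log_pos (by norm_num)
  rw [← measure_inter_conull (ae_iff.1 ae_mem_Ioi_two_map_ecfEntryInv),
    preimage_ecfT_one_div_Ioo_inter_Ioi_two ha hb,
    measure_iUnion (pairwise_disjoint_branchPreimage ha hb) fun _ => measurableSet_branchPreimage _,
    ← tsum_even_add_odd ENNReal.summable ENNReal.summable]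
  simp_rw [map_ecfEntryInv_branchPreimage_even ha hab, map_ecfEntryInv_branchPreimage_odd hab hb]
  rw [tsum_ofReal_primMuOdds_sub (by positivity) (by linarith),
    tsum_ofReal_primMuOdds_sub (by linarith) (by linarith), ← ENNReal.ofReal_add,
    ecfMu_Ioo ha hab hb]
  · congr 1
    unfold primMu
    ring_nf
  · exact div_nonneg (sub_nonneg.2 (log_le_log (by linarith) (by linarith))) hlog3.le
  · exact div_nonneg (sub_nonneg.2 (log_le_log (by linarith) (by linarith))) hlog3.le

end branchPreimage

lemma ae_ecfR_mem_Ioo_zero_one : ∀ᵐ x ∂ecfMu, ecfR x ∈ Ioo 0 1 := by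
  filter_upwards [ae_mem_ECFdom] with x hx
  rw [ecfR_eq_comp]
  exact ecfT_one_div_mem_Ioo (irrational_ecfEntryInv hx) (zero_le_two.trans (two_lt_ecfEntryInv hx).le)

lemma ecfMu_preimage_ecfR_Ioo (a b : ℝ) : ecfMu (ecfR ⁻¹' Ioo a b) = ecfMu (Ioo a b) := by
  have hI : ∀ᵐ x ∂ecfMu, x ∈ Ioo 0 1 := by
    filter_upwards [ae_mem_ECFdom] with x hx using ⟨hx.1.1, hx.1.2.lt_of_ne hx.2.ne_one⟩
  rw [← measure_inter_conull (s := Ioo a b) (ae_iff.1 hI),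
    ← measure_inter_conull (s := ecfR ⁻¹' Ioo a b) (t := ecfR ⁻¹' Ioo 0 1)
      (ae_iff.1 ae_ecfR_mem_Ioo_zero_one),
    ← preimage_inter, Ioo_inter_Ioo]
  rcases le_total (max a 0) (min b 1) with h | h
  · rw [ecfR_eq_comp, preimage_comp, ← Measure.map_apply_of_aemeasurable aemeasurable_ecfEntryInv
      (measurable_ecfT_one_div measurableSet_Ioo),
      map_ecfEntryInv_preimage_Ioo (le_max_right _ _) h (min_le_right _ _)]
  · simp [Ioo_eq_empty h.not_gt]

lemma map_ecfR_ecfMu : ecfMu.map ecfR = ecfMu :=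
  (Real.measure_ext_Ioo_rat fun a b => by
    rw [Measure.map_apply_of_aemeasurable aemeasurable_ecfR measurableSet_Ioo,
      ecfMu_preimage_ecfR_Ioo]).symm

end ECF

end

/-- The jump transformation `R` preserves the probability measure `μ`. -/
theorem ecfR_preserves_mu :
    ∀ A : Set ℝ, MeasurableSet A → A ⊆ ECFdom →
      ecfMu (ecfR ⁻¹' A ∩ ECFdom) = ecfMu A := by
  intro A hA _
  rw [measure_inter_conull (ae_iff.1 ECF.ae_mem_ECFdom),
    ← Measure.map_apply_of_aemeasurable ECF.aemeasurable_ecfR hA, ECF.map_ecfR_ecfMu]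
end

section
/- For every symbol σ = (h,(m,ε)) ∈ Σ with (m,ε) ≠ (1,−1), let C[σ] = {x ∈ (0,1]∖ℚ : τ(x) = h, and the ECF digit of x at index h+1 is (m,ε)}. Then there exist integers a, b, c, d with ad − bc = ±1 such that R(x) = (ax+b)/(cx+d) for all x ∈ C[σ], and the Möbius map M(x) = (ax+b)/(cx+d) satisfies |M′(x)| ≥ 4 and |M″(x)/M′(x)²| ≤ 2 for every x ∈ C[σ]. In particular R is uniformly expanding with uniformly bounded distortion: inf over irrational x in (0,1] of |R′(x)| is ≥ 4 and sup of |R″(x)/(R′(x))²| is ≤ 2, the derivatives being those of the corresponding Möbius maps. -/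
open MeasureTheory Filter

/-! On `(1/2, 1]` the map `T` is the parabolic branch `x ↦ 2 - 1/x`, whose `n`-th iterate is
the Möbius map `x ↦ ((n+1)x - n)/(nx - n + 1)`. Following `τ(x) = h` such steps by the branch
`y ↦ ε(1/y - 2m)` of the digit `(m, ε)` writes `R` as a unimodular Möbius map with denominator
`E = (h+1)x - h`, so that `|R'| = 1/E²` and `|R''/R'²| = 2(h+1)E`. As the digit is not `(1, -1)`,
`T^h x ≤ 1/2`, which forces `(h+2)E ≤ 1`, and both bounds follow. -/

section Moebius

variable {a b c d x : ℝ}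

theorem hasDerivAt_moebius (hx : c * x + d ≠ 0) :
    HasDerivAt (fun y => (a * y + b) / (c * y + d)) ((a * d - b * c) / (c * x + d) ^ 2) x := by
  have hden : HasDerivAt (fun y => c * y + d) c x := by
    simpa using ((hasDerivAt_id x).const_mul c).add_const d
  have hnum : HasDerivAt (fun y => a * y + b) a x := by
    simpa using ((hasDerivAt_id x).const_mul a).add_const b
  refine (hnum.fun_div hden hx).congr_deriv ?_
  ring

theorem deriv_moebius (hx : c * x + d ≠ 0) :
    deriv (fun y => (a * y + b) / (c * y + d)) x = (a * d - b * c) / (c * x + d) ^ 2 :=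
  (hasDerivAt_moebius hx).deriv

theorem deriv_deriv_moebius (hx : c * x + d ≠ 0) :
    deriv (deriv fun y => (a * y + b) / (c * y + d)) x
      = -(2 * c * (a * d - b * c)) / (c * x + d) ^ 3 := by
  have hnear : ∀ᶠ y in nhds x, c * y + d ≠ 0 :=
    (by fun_prop : ContinuousAt (fun y => c * y + d) x).eventually_ne hx
  have hderiv : deriv (fun y => (a * y + b) / (c * y + d))
      =ᶠ[nhds x] fun y => (a * d - b * c) / (c * y + d) ^ 2 :=
    hnear.mono fun y hy => deriv_moebius hy
  have hsq : HasDerivAt (fun y => (c * y + d) ^ 2) (2 * (c * x + d) * c) x := by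
    simpa using (((hasDerivAt_id x).const_mul c).add_const d).fun_pow 2
  rw [hderiv.deriv_eq, ((hasDerivAt_const x (a * d - b * c)).fun_div hsq (pow_ne_zero 2 hx)).deriv]
  field_simp
  ring

theorem deriv_deriv_div_deriv_sq_moebius (hx : c * x + d ≠ 0) :
    deriv (deriv fun y => (a * y + b) / (c * y + d)) x
        / (deriv (fun y => (a * y + b) / (c * y + d)) x) ^ 2
      = -(2 * c * (c * x + d)) / (a * d - b * c) := by
  rw [deriv_deriv_moebius hx, deriv_moebius hx]
  rcases eq_or_ne (a * d - b * c) 0 with hdet | hdet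
  · simp [hdet]
  · field_simp

end Moebius

theorem ecfT_eq_fract_or_one_sub_fract {x : ℝ} (hx : 0 ≤ x) :
    ecfT x = Int.fract (1 / x) ∨ ecfT x = 1 - Int.fract (1 / x) := by
  have hfloor : 0 ≤ ⌊1 / x⌋ := Int.floor_nonneg.mpr (by positivity)
  rw [ecfT, ecfXi, ecfK, Int.fract]
  generalize ⌊1 / x⌋ = n at *
  generalize hk : (n + 1).toNat / 2 = k
  rcases Int.emod_two_eq_zero_or_one n with hpar | hpar
  · have h2k : 2 * (k : ℝ) = n := by exact_mod_cast (by omega : 2 * (k : ℤ) = n)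
    left
    rw [if_pos hpar, h2k]
    ring
  · have h2k : 2 * (k : ℝ) = n + 1 := by exact_mod_cast (by omega : 2 * (k : ℤ) = n + 1)
    right
    rw [if_neg (by omega), h2k]
    push_cast
    ring

theorem mapsTo_ecfT_ECFdom : Set.MapsTo ecfT ECFdom ECFdom := by
  rintro x ⟨⟨hx0, -⟩, hirr⟩
  have hinv : Irrational (1 / x) := by simpa using hirr.inv
  have hfract : Irrational (Int.fract (1 / x)) := hinv.sub_intCast _
  have hpos : 0 < Int.fract (1 / x) := Int.fract_pos.mpr (hinv.ne_int _)
  have hlt := Int.fract_lt_one (1 / x)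
  rcases ecfT_eq_fract_or_one_sub_fract hx0.le with hT | hT <;> rw [hT]
  · exact ⟨⟨hpos, hlt.le⟩, hfract⟩
  · exact ⟨⟨by linarith, by linarith⟩, by simpa using hfract.intCast_sub 1⟩

section HalfOne

variable {x : ℝ}

theorem floor_one_div_eq_one_of_mem_Ioc (hx : x ∈ Set.Ioc (1 / 2) 1) : ⌊1 / x⌋ = 1 := by
  obtain ⟨hlow, hup⟩ := hx
  have hpos : 0 < x := by linarith
  rw [Int.floor_eq_iff, Int.cast_one, le_div_iff₀ hpos, div_lt_iff₀ hpos]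
  constructor <;> linarith

theorem ecfK_eq_one_of_mem_Ioc (hx : x ∈ Set.Ioc (1 / 2) 1) : ecfK x = 1 := by
  rw [ecfK, floor_one_div_eq_one_of_mem_Ioc hx]
  rfl

theorem ecfXi_eq_neg_one_of_mem_Ioc (hx : x ∈ Set.Ioc (1 / 2) 1) : ecfXi x = -1 := by
  rw [ecfXi, floor_one_div_eq_one_of_mem_Ioc hx]
  rfl

theorem ecfT_eq_two_sub_inv_of_mem_Ioc (hx : x ∈ Set.Ioc (1 / 2) 1) : ecfT x = 2 - 1 / x := by
  rw [ecfT, ecfXi_eq_neg_one_of_mem_Ioc hx, ecfK_eq_one_of_mem_Ioc hx]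
  push_cast
  ring

end HalfOne

theorem iterate_ecfT_mul_eq {x : ℝ} {n : ℕ} (hx : ∀ j < n, ecfT^[j] x ∈ Set.Ioc (1 / 2) 1) :
    0 < n * x - n + 1 ∧ ecfT^[n] x * (n * x - n + 1) = (n + 1) * x - n := by
  induction n with
  | zero => simp
  | succ n ih =>
    obtain ⟨hD, hE⟩ := ih fun j hj => hx j (by omega)
    have hmem := hx n n.lt_succ_self
    have ht : 0 < ecfT^[n] x := by linarith [hmem.1]
    rw [Function.iterate_succ_apply', ecfT_eq_two_sub_inv_of_mem_Ioc hmem]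
    push_cast
    constructor
    · nlinarith
    · field_simp
      linear_combination hE

theorem iterate_ecfT_notMem_of_lt_ecfTau {x : ℝ} {j : ℕ} (hj : j < ecfTau x) :
    ecfT^[j] x ∉ Set.Ioc 0 (1 / 2) :=
  Nat.notMem_of_lt_sInf hj

theorem iterate_ecfT_mem_ECFdom {x : ℝ} (hx : x ∈ ECFdom) (n : ℕ) : ecfT^[n] x ∈ ECFdom :=
  mapsTo_ecfT_ECFdom.iterate n hx

theorem iterate_ecfT_mem_Ioc_of_lt_ecfTau {x : ℝ} (hx : x ∈ ECFdom) {j : ℕ} (hj : j < ecfTau x) :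
    ecfT^[j] x ∈ Set.Ioc (1 / 2) 1 := by
  obtain ⟨⟨hpos, hle⟩, -⟩ := iterate_ecfT_mem_ECFdom hx j
  exact ⟨not_le.mp fun hhalf => iterate_ecfT_notMem_of_lt_ecfTau hj ⟨hpos, hhalf⟩, hle⟩

theorem ecfDigK_succ (x : ℝ) (n : ℕ) : ecfDigK x (n + 1) = ecfK (ecfT^[n] x) := rfl

theorem ecfDigXi_succ (x : ℝ) (n : ℕ) : ecfDigXi x (n + 1) = ecfXi (ecfT^[n] x) := rfl

section Cylinder

variable {x : ℝ} {n : ℕ}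

theorem iterate_ecfTau_mul_eq (hx : x ∈ ECFdom) (hτ : ecfTau x = n) :
    0 < n * x - n + 1 ∧ ecfT^[n] x * (n * x - n + 1) = (n + 1) * x - n :=
  iterate_ecfT_mul_eq fun _ hj => iterate_ecfT_mem_Ioc_of_lt_ecfTau hx (hτ ▸ hj)

theorem ecfR_eq_of_ecfTau_eq (hx : x ∈ ECFdom) (hτ : ecfTau x = n) :
    ecfR x = ecfDigXi x (n + 1) * ((n - 2 * ecfDigK x (n + 1) * (n + 1)) * x
      + (2 * ecfDigK x (n + 1) * n - n + 1)) / ((n + 1) * x - n) := by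
  obtain ⟨hD, hE⟩ := iterate_ecfTau_mul_eq hx hτ
  have ht : 0 < ecfT^[n] x := (iterate_ecfT_mem_ECFdom hx n).1.1
  have hE0 : (n + 1) * x - n ≠ 0 := by rw [← hE]; positivity
  rw [ecfR, hτ, Function.iterate_succ_apply', ecfT, ecfDigXi_succ, ecfDigK_succ, eq_div_iff hE0]
  field_simp
  linear_combination -(ecfXi (ecfT^[n] x) : ℝ) * hE

theorem le_half_of_ecfK_ecfXi_ne (hx : x ∈ Set.Ioc 0 1) (hdig : ¬(ecfK x = 1 ∧ ecfXi x = -1)) :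
    x ≤ 1 / 2 :=
  not_lt.mp fun hhalf =>
    hdig ⟨ecfK_eq_one_of_mem_Ioc ⟨hhalf, hx.2⟩, ecfXi_eq_neg_one_of_mem_Ioc ⟨hhalf, hx.2⟩⟩

theorem ecfR_denominator_bounds (hx : x ∈ ECFdom) (hτ : ecfTau x = n)
    (hdig : ¬(ecfDigK x (n + 1) = 1 ∧ ecfDigXi x (n + 1) = -1)) :
    0 < (n + 1) * x - n ∧ (n + 2) * ((n + 1) * x - n) ≤ 1 := by
  obtain ⟨hD, hE⟩ := iterate_ecfTau_mul_eq hx hτ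
  have ht := (iterate_ecfT_mem_ECFdom hx n).1
  have hhalf : ecfT^[n] x ≤ 1 / 2 := le_half_of_ecfK_ecfXi_ne ht hdig
  have hx_le : (n + 2) * x ≤ n + 1 := by nlinarith [mul_le_mul_of_nonneg_right hhalf hD.le]
  constructor
  · rw [← hE]
    exact mul_pos ht.1 hD
  · nlinarith [mul_le_mul_of_nonneg_left hx_le (by positivity : (0 : ℝ) ≤ n + 1)]

end Cylinder

/-- On each length-one Σ-cylinder `C[h·m^ε]`, the jump transformation `R` coincides with a
Möbius map with integer coefficients and determinant `±1`, which is uniformly expanding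
(`|M'| ≥ 4`) with uniformly bounded distortion (`|M''/M'²| ≤ 2`). -/
theorem ecfR_moebius_expanding_bounded_distortion :
    ∀ (h m : ℕ) (ε : ℤ), 1 ≤ m → (ε = 1 ∨ ε = -1) → ¬(m = 1 ∧ ε = -1) →
      ∃ a b c d : ℤ, (a * d - b * c = 1 ∨ a * d - b * c = -1) ∧
        ∀ x ∈ {x : ℝ | x ∈ ECFdom ∧ ecfTau x = h ∧
            ecfDigK x (h+1) = m ∧ ecfDigXi x (h+1) = ε},
          ecfR x = ((a : ℝ) * x + b) / ((c : ℝ) * x + d) ∧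
          4 ≤ |deriv (fun y : ℝ => ((a : ℝ) * y + b) / ((c : ℝ) * y + d)) x| ∧
          |deriv (deriv (fun y : ℝ => ((a : ℝ) * y + b) / ((c : ℝ) * y + d))) x /
            (deriv (fun y : ℝ => ((a : ℝ) * y + b) / ((c : ℝ) * y + d)) x) ^ 2| ≤ 2 := by
  intro h m ε _ hε hdig
  refine ⟨ε * (h - 2 * m * (h + 1)), ε * (2 * m * h - h + 1), h + 1, -h, ?_, ?_⟩
  · rcases hε with rfl | rfl
    · right; ring
    · left; ring
  rintro x ⟨hx, hτ, hk, hξ⟩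
  obtain ⟨hE0, hE1⟩ := ecfR_denominator_bounds hx hτ (hk ▸ hξ ▸ hdig)
  have hden : ((h + 1 : ℤ) : ℝ) * x + ((-h : ℤ) : ℝ) = (h + 1) * x - h := by push_cast; ring
  have hdet : ((ε * (h - 2 * m * (h + 1)) : ℤ) : ℝ) * ((-h : ℤ) : ℝ)
      - ((ε * (2 * m * h - h + 1) : ℤ) : ℝ) * ((h + 1 : ℤ) : ℝ) = -ε := by push_cast; ring
  have hε1 : |(ε : ℝ)| = 1 := by rcases hε with rfl | rfl <;> norm_num
  refine ⟨?_, ?_, ?_⟩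
  · rw [ecfR_eq_of_ecfTau_eq hx hτ, hk, hξ, hden]
    push_cast
    ring
  · rw [deriv_moebius (hden ▸ hE0.ne'), hdet, hden, abs_div, abs_neg, hε1,
      abs_of_pos (by positivity), le_div_iff₀ (by positivity)]
    nlinarith
  · rw [deriv_deriv_div_deriv_sq_moebius (hden ▸ hE0.ne'), hdet, hden, abs_div, abs_neg,
      abs_neg, hε1, div_one, abs_of_pos (by positivity)]
    push_cast
    nlinarith
end
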